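/- Existence of an L-stable multiset encoding: let H be a countable set with injection Z : H → ℕ⁺, and let B ∈ ℕ with B ≥ 2. Define f : H → ℝ by f(h) = B^{−Z(h)}. Then for any two finite multisets S1, S2 over H each of cardinality less than B: (1) the sums ∑_{h∈S1} f(h) and ∑_{h∈S2} f(h) are equal if and only if S1 = S2 as multisets; and (2) |∑_{h∈S1} f(h) − ∑_{h∈S2} f(h)| ≤ (1/B) · d_S(S1, S2), where d_S(S1, S2) = |S1| + |S2| − 2|S1 ∩ S2| counts the multiset symmetric difference. -/

import Mathlib

open scoped BigOperators

/-- Existence of an `L`-stable multiset encoding with `L = 1/B`: with `f h = B^(−Z h)`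
for an injection `Z : H → ℕ⁺` and `B ≥ 2`, for multisets `S1, S2` of cardinality `< B`,
the encoded sums agree iff the multisets agree, and the difference of sums is bounded by
`(1/B) · d_S(S1, S2)` where `d_S(S1,S2) = |S1| + |S2| − 2|S1 ∩ S2|`. -/
theorem stable_multiset_encoding {H : Type*} [DecidableEq H] [Countable H]
    (Z : H → ℕ) (hZinj : Function.Injective Z) (hZpos : ∀ h, 1 ≤ Z h)
    (B : ℕ) (hB : 2 ≤ B)
    (f : H → ℝ) (hf : ∀ h, f h = (B : ℝ) ^ (-(Z h : ℤ)))
    (S1 S2 : Multiset H) (h1 : S1.card < B) (h2 : S2.card < B) :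
    ((S1.map f).sum = (S2.map f).sum ↔ S1 = S2) ∧
      |(S1.map f).sum - (S2.map f).sum| ≤
        (1 / B) * ((S1.card : ℝ) + (S2.card : ℝ) - 2 * ((S1 ∩ S2).card : ℝ)) := by
  have hB2 : (2:ℝ) ≤ (B:ℝ) := by exact_mod_cast hB
  have hBpos : (0:ℝ) < (B:ℝ) := by linarith
  have hB1 : (1:ℝ) ≤ (B:ℝ) := by linarith
  have hBne : (B:ℝ) ≠ 0 := ne_of_gt hBpos
  have hfpos : ∀ h, 0 < f h := by
    intro h; rw [hf]; positivity
  have hfle : ∀ h, f h ≤ 1 / B := by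
    intro h; rw [hf]
    have : (B:ℝ) ^ (-(Z h : ℤ)) ≤ (B:ℝ) ^ (-1 : ℤ) :=
      zpow_le_zpow_right₀ hB1 (by have := hZpos h; omega)
    simpa [zpow_neg, one_div] using this
  -- generic bound on sums
  have sum_nonneg : ∀ T : Multiset H, 0 ≤ (T.map f).sum := by
    intro T
    apply Multiset.sum_nonneg
    intro x hx
    obtain ⟨h, _, rfl⟩ := Multiset.mem_map.mp hx
    exact (hfpos h).le
  have sum_le : ∀ T : Multiset H, (T.map f).sum ≤ (T.card : ℝ) * (1 / B) := by
    intro T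
    have hle : ∀ x ∈ T.map f, x ≤ 1 / (B:ℝ) := by
      intro x hx
      obtain ⟨h, _, rfl⟩ := Multiset.mem_map.mp hx
      exact hfle h
    have := Multiset.sum_le_card_nsmul _ _ hle
    simpa [Multiset.card_map, nsmul_eq_mul] using this
  -- key strict comparison lemma
  have key : ∀ (T T' : Multiset H) (h0 : H), h0 ∈ T → (∀ h ∈ T', Z h0 < Z h) →
      T'.card < B → (T'.map f).sum < (T.map f).sum := by
    intro T T' h0 h0T hlt hcard
    have hle : ∀ x ∈ T'.map f, x ≤ (B:ℝ) ^ (-(Z h0 : ℤ) - 1) := by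
      intro x hx
      obtain ⟨h, hh, rfl⟩ := Multiset.mem_map.mp hx
      rw [hf]
      exact zpow_le_zpow_right₀ hB1 (by have := hlt h hh; omega)
    have hsle : (T'.map f).sum ≤ (T'.card : ℝ) * (B:ℝ) ^ (-(Z h0 : ℤ) - 1) := by
      have := Multiset.sum_le_card_nsmul _ _ hle
      simpa [Multiset.card_map, nsmul_eq_mul] using this
    have hlt2 : (T'.card : ℝ) * (B:ℝ) ^ (-(Z h0 : ℤ) - 1) <
        (B:ℝ) * (B:ℝ) ^ (-(Z h0 : ℤ) - 1) := by
      apply mul_lt_mul_of_pos_right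
      · exact_mod_cast hcard
      · positivity
    have heq : (B:ℝ) * (B:ℝ) ^ (-(Z h0 : ℤ) - 1) = (B:ℝ) ^ (-(Z h0 : ℤ)) := by
      rw [mul_comm, ← zpow_add_one₀ hBne]
      congr 1
      ring
    have hsge : (B:ℝ) ^ (-(Z h0 : ℤ)) ≤ (T.map f).sum := by
      rw [← hf]
      refine Multiset.single_le_sum ?_ _ (Multiset.mem_map_of_mem f h0T)
      intro x hx
      obtain ⟨h, _, rfl⟩ := Multiset.mem_map.mp hx
      exact (hfpos h).le
    linarith
  -- main injectivity lemma for disjoint multisets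
  have main : ∀ T T' : Multiset H, (∀ h, h ∈ T → h ∉ T') → T.card < B → T'.card < B →
      T ≠ T' → (T.map f).sum ≠ (T'.map f).sum := by
    intro T T' hdisj hcT hcT' hne
    have hTT' : T + T' ≠ 0 := by
      intro h
      rw [add_eq_zero] at h
      exact hne (h.1.trans h.2.symm)
    obtain ⟨a, ha⟩ := Multiset.exists_mem_of_ne_zero hTT'
    set Sset : Set ℕ := {n : ℕ | ∃ h, h ∈ T + T' ∧ Z h = n} with hSset
    have hSne : Sset.Nonempty := ⟨Z a, a, ha, rfl⟩
    obtain ⟨h0, h0mem, h0Z⟩ := Nat.sInf_mem hSne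
    have hmin : ∀ h, h ∈ T + T' → Z h0 ≤ Z h := by
      intro h hh
      rw [h0Z]
      exact Nat.sInf_le ⟨h, hh, rfl⟩
    rw [Multiset.mem_add] at h0mem
    rcases h0mem with hmem | hmem
    · have hstrict : ∀ h ∈ T', Z h0 < Z h := by
        intro h hh
        have hle := hmin h (Multiset.mem_add.mpr (Or.inr hh))
        have hne' : h ≠ h0 := by
          intro rfl'; subst rfl'; exact hdisj h hmem hh
        exact lt_of_le_of_ne hle (fun heq => hne' (hZinj heq.symm))
      exact fun heq => absurd heq.symm (ne_of_lt (key T T' h0 hmem hstrict hcT'))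
    · have hstrict : ∀ h ∈ T, Z h0 < Z h := by
        intro h hh
        have hle := hmin h (Multiset.mem_add.mpr (Or.inl hh))
        have hne' : h ≠ h0 := by
          intro rfl'; subst rfl'; exact hdisj h hh hmem
        exact lt_of_le_of_ne hle (fun heq => hne' (hZinj heq.symm))
      exact ne_of_lt (key T' T h0 hmem hstrict hcT)
  -- decomposition
  set I := S1 ∩ S2 with hI
  set T1 := S1 - I with hT1
  set T2 := S2 - I with hT2
  have hS1 : T1 + I = S1 := tsub_add_cancel_of_le (Multiset.inter_le_left)
  have hS2 : T2 + I = S2 := tsub_add_cancel_of_le (Multiset.inter_le_right)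
  have hdisj : ∀ h, h ∈ T1 → h ∉ T2 := by
    intro h hh1 hh2
    rw [hT1, ← Multiset.count_pos, Multiset.count_sub, hI, Multiset.count_inter] at hh1
    rw [hT2, ← Multiset.count_pos, Multiset.count_sub, hI, Multiset.count_inter] at hh2
    omega
  have hc1 : T1.card + I.card = S1.card := by rw [← hS1, Multiset.card_add]
  have hc2 : T2.card + I.card = S2.card := by rw [← hS2, Multiset.card_add]
  have e1 : (S1.map f).sum = (T1.map f).sum + (I.map f).sum := by
    rw [← hS1, Multiset.map_add, Multiset.sum_add]
  have e2 : (S2.map f).sum = (T2.map f).sum + (I.map f).sum := by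
    rw [← hS2, Multiset.map_add, Multiset.sum_add]
  constructor
  · constructor
    · intro hsum
      by_contra hne
      have hTne : T1 ≠ T2 := by
        intro heq
        apply hne
        rw [← hS1, ← hS2, heq]
      have hcT1 : T1.card < B := by omega
      have hcT2 : T2.card < B := by omega
      exact main T1 T2 hdisj hcT1 hcT2 hTne (by linarith [e1, e2])
    · intro h; rw [h]
  · have b1 := sum_le T1
    have b2 := sum_le T2
    have n1 := sum_nonneg T1
    have n2 := sum_nonneg T2
    have hBinv : (0:ℝ) ≤ 1 / B := by positivity
    have habs : |(S1.map f).sum - (S2.map f).sum| ≤ (T1.map f).sum + (T2.map f).sum := by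
      rw [e1, e2]
      rw [abs_le]
      constructor <;> linarith
    have hcard1 : (T1.card : ℝ) + (I.card : ℝ) = (S1.card : ℝ) := by exact_mod_cast hc1
    have hcard2 : (T2.card : ℝ) + (I.card : ℝ) = (S2.card : ℝ) := by exact_mod_cast hc2
    calc |(S1.map f).sum - (S2.map f).sum| ≤ (T1.map f).sum + (T2.map f).sum := habs
      _ ≤ (T1.card : ℝ) * (1/B) + (T2.card : ℝ) * (1/B) := by linarith
      _ = (1 / B) * ((S1.card : ℝ) + (S2.card : ℝ) - 2 * ((S1 ∩ S2).card : ℝ)) := by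
          rw [← hI, ← hcard1, ← hcard2]; ring
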